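/- Let R be a Dedekind domain with field of fractions K. Let J = (A_{R,K})ˣ be the group of units of the finite adèle ring (the finite idele group), let Kˣ → J be the group homomorphism induced by the canonical embedding K → A_{R,K}, and let (∏_v O_v)ˣ → J be the group homomorphism induced by the canonical embedding ∏_v O_v → A_{R,K} of the finite integral adèles. Then the quotient of J by the subgroup generated by the images of Kˣ and (∏_v O_v)ˣ is isomorphic, as a group, to the ideal class group of R. (This is Weil's adelic description of line bundles, i.e. of the case G = GL₁, for the affine curve Spec R.) -/

import Mathlib

/-!
An idèle `a` defines the fractional ideal `∏ᵥ 𝔭ᵥ ^ ordᵥ(aᵥ)`. This is a homomorphism from the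
idèles onto the invertible fractional ideals (uniformizers realise every finitely supported
exponent vector), its kernel consists of the idèles that are units at every place, i.e. the image
of `(∏ᵥ Oᵥ)ˣ`, and it sends the diagonal image of `x ∈ Kˣ` to the principal ideal `(x)`.
So the preimage of the principal ideals is `Kˣ · (∏ᵥ Oᵥ)ˣ`, and the quotient is the class group.
-/

open IsDedekindDomain

noncomputable section

namespace DedekindDomain

variable (R K : Type*) [CommRing R] [IsDedekindDomain R] [Field K] [Algebra R K]
  [IsFractionRing R K]

/-- The finite integral adèles `∏_v O_v` (removed from Mathlib; old definition restored). -/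
def FiniteIntegralAdeles : Type _ :=
  ∀ v : HeightOneSpectrum R, v.adicCompletionIntegers K

instance : CommRing (FiniteIntegralAdeles R K) :=
  inferInstanceAs (CommRing (∀ v : HeightOneSpectrum R, v.adicCompletionIntegers K))

/-- The canonical (componentwise) inclusion `∏_v O_v → A_{R,K}`. -/
def finiteIntegralAdelesToFiniteAdeleRing :
    FiniteIntegralAdeles R K →+* FiniteAdeleRing R K where
  toFun r := ⟨fun v => (r v : v.adicCompletion K), Filter.Eventually.of_forall fun v => (r v).2⟩
  map_one' := rfl
  map_mul' _ _ := rfl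
  map_zero' := rfl
  map_add' _ _ := rfl

instance : Algebra (FiniteIntegralAdeles R K) (FiniteAdeleRing R K) :=
  (finiteIntegralAdelesToFiniteAdeleRing R K).toAlgebra

end DedekindDomain

end

open DedekindDomain

open IsDedekindDomain HeightOneSpectrum FractionalIdeal
open scoped nonZeroDivisors

namespace FractionalIdeal

variable {R K : Type*} [CommRing R] [IsDedekindDomain R] [Field K] [Algebra R K]
  [IsFractionRing R K]

theorem count_spanSingleton_algebraMap (v : HeightOneSpectrum R) {r : R} (hr : r ≠ 0) :
    count K v (spanSingleton R⁰ (algebraMap R K r)) =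
      -WithZero.log (v.valuation K (algebraMap R K r)) := by
  rw [← coeIdeal_span_singleton, count_coe K v (by simpa using hr), valuation_of_algebraMap,
    intValuation_if_neg _ hr, WithZero.log_exp, neg_neg]

theorem count_spanSingleton (v : HeightOneSpectrum R) {x : K} (hx : x ≠ 0) :
    count K v (spanSingleton R⁰ x) = -WithZero.log (v.valuation K x) := by
  obtain ⟨r, s, hs, rfl⟩ := IsFractionRing.div_surjective (A := R) x
  have hr : r ≠ 0 := by rintro rfl; simp at hx
  have hs : s ≠ 0 := nonZeroDivisors.ne_zero hs
  have hrK : algebraMap R K r ≠ 0 := by simpa using hr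
  have hsK : algebraMap R K s ≠ 0 := by simpa using hs
  rw [div_eq_mul_inv, ← spanSingleton_mul_spanSingleton, ← spanSingleton_inv,
    count_mul K v (spanSingleton_ne_zero_iff.mpr hrK)
      (inv_ne_zero (spanSingleton_ne_zero_iff.mpr hsK)),
    count_inv, count_spanSingleton_algebraMap v hr, count_spanSingleton_algebraMap v hs, map_mul,
    map_inv₀, WithZero.log_mul ((Valuation.ne_zero_iff _).mpr hrK)
      (inv_ne_zero ((Valuation.ne_zero_iff _).mpr hsK)), WithZero.log_inv]
  ring

end FractionalIdeal

namespace IsDedekindDomain.HeightOneSpectrum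

variable {R : Type*} [CommRing R] [IsDedekindDomain R] (K : Type*) [Field K] [Algebra R K]
  [IsFractionRing R K]

noncomputable def fractionalIdealUnit (v : HeightOneSpectrum R) : (FractionalIdeal R⁰ K)ˣ :=
  Units.mk0 v.asIdeal (coeIdeal_ne_zero.mpr v.ne_bot)

end IsDedekindDomain.HeightOneSpectrum

namespace IsDedekindDomain.FiniteAdeleRing

open scoped FiniteAdeleRing

variable {R K : Type*} [CommRing R] [IsDedekindDomain R] [Field K] [Algebra R K]
  [IsFractionRing R K]

/-- `Valued.v` is multiplicative and takes the value `exp (-1)` on a uniformizer, hence the sign. -/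
noncomputable def ord (a : 𝔸ᶠ[R, K]ˣ) (v : HeightOneSpectrum R) : ℤ :=
  -WithZero.log (Valued.v ((a : 𝔸ᶠ[R, K]) v))

theorem valued_ne_zero (a : 𝔸ᶠ[R, K]ˣ) (v : HeightOneSpectrum R) :
    Valued.v ((a : 𝔸ᶠ[R, K]) v) ≠ 0 :=
  (Valuation.ne_zero_iff _).mpr ((isUnit_iff.mp a.isUnit).1 v)

theorem ord_mul (a b : 𝔸ᶠ[R, K]ˣ) (v : HeightOneSpectrum R) :
    ord (a * b) v = ord a v + ord b v := by
  change -WithZero.log (Valued.v ((a : 𝔸ᶠ[R, K]) v * (b : 𝔸ᶠ[R, K]) v)) = _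
  rw [map_mul, WithZero.log_mul (valued_ne_zero a v) (valued_ne_zero b v), ord, ord, neg_add]

theorem ord_eq_zero_iff {a : 𝔸ᶠ[R, K]ˣ} {v : HeightOneSpectrum R} :
    ord a v = 0 ↔ Valued.v ((a : 𝔸ᶠ[R, K]) v) = 1 := by
  rw [ord, neg_eq_zero, ← WithZero.exp_eq_one, WithZero.exp_log (valued_ne_zero a v)]

theorem ord_one (v : HeightOneSpectrum R) : ord (1 : 𝔸ᶠ[R, K]ˣ) v = 0 :=
  ord_eq_zero_iff.mpr (map_one _)

theorem eventually_ord_eq_zero (a : 𝔸ᶠ[R, K]ˣ) : ∀ᶠ v in Filter.cofinite, ord a v = 0 := by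
  simpa only [ord_eq_zero_iff] using (isUnit_iff.mp a.isUnit).2

theorem ord_unitEmbedding (x : Kˣ) (v : HeightOneSpectrum R) :
    ord (unitEmbedding R K x) v = -WithZero.log (v.valuation K x) := by
  rw [ord, unitEmbedding_apply, algebraMap_apply, valuedAdicCompletion_eq_valuation']

theorem exists_ord_eq {n : HeightOneSpectrum R → ℤ} (hn : ∀ᶠ v in Filter.cofinite, n v = 0) :
    ∃ a : 𝔸ᶠ[R, K]ˣ, ∀ v, ord a v = n v := by
  choose π hπ using fun v : HeightOneSpectrum R ↦ v.valuation_exists_uniformizer K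
  have hπ0 (v : HeightOneSpectrum R) : (π v : v.adicCompletion K) ≠ 0 := by
    rw [← Valuation.ne_zero_iff Valued.v, valuedAdicCompletion_eq_valuation', hπ]
    exact WithZero.exp_ne_zero
  let x (v : HeightOneSpectrum R) : (v.adicCompletion K)ˣ := (Units.mk0 _ (hπ0 v)) ^ n v
  have hx : ∀ᶠ v in Filter.cofinite,
      x v ∈ (Submonoid.ofClass (v.adicCompletionIntegers K)).units := by
    filter_upwards [hn] with v hv
    simp [x, hv, one_mem]
  refine ⟨RestrictedProduct.mkUnit x hx, fun v ↦ ?_⟩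
  change -WithZero.log (Valued.v ((x v : (v.adicCompletion K)ˣ) : v.adicCompletion K)) = n v
  simp [x, hπ]

theorem mem_range_integralUnits_iff {a : 𝔸ᶠ[R, K]ˣ} :
    a ∈ (Units.map (algebraMap (FiniteIntegralAdeles R K) 𝔸ᶠ[R, K]).toMonoidHom).range ↔
      ∀ v, ord a v = 0 := by
  simp only [ord_eq_zero_iff]
  constructor
  · rintro ⟨r, rfl⟩ v
    exact adicCompletionIntegers.isUnit_iff_valued_eq_one.mp (Pi.isUnit_iff.mp r.isUnit v)
  · intro ha
    let r : FiniteIntegralAdeles R K := fun v ↦ ⟨(a : 𝔸ᶠ[R, K]) v, (ha v).le⟩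
    have hr : IsUnit r := Pi.isUnit_iff.mpr fun v ↦
      adicCompletionIntegers.isUnit_iff_valued_eq_one.mpr (ha v)
    exact ⟨hr.unit, Units.ext rfl⟩

theorem hasFiniteMulSupport_zpow_ord {G : Type*} [DivInvMonoid G] (a : 𝔸ᶠ[R, K]ˣ)
    (f : HeightOneSpectrum R → G) : Function.HasFiniteMulSupport fun v ↦ f v ^ ord a v :=
  (Filter.eventually_cofinite.mp (eventually_ord_eq_zero a)).subset fun v hv h ↦ hv (by simp [h])

variable (R K) in
noncomputable def toFractionalIdeal : 𝔸ᶠ[R, K]ˣ →* (FractionalIdeal R⁰ K)ˣ where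
  toFun a := ∏ᶠ v, v.fractionalIdealUnit K ^ ord a v
  map_one' := by simp only [ord_one, zpow_zero, finprod_one]
  map_mul' a b := by
    simp only [ord_mul, zpow_add]
    exact finprod_mul_distrib (hasFiniteMulSupport_zpow_ord a _)
      (hasFiniteMulSupport_zpow_ord b _)

theorem coe_toFractionalIdeal (a : 𝔸ᶠ[R, K]ˣ) :
    (toFractionalIdeal R K a : FractionalIdeal R⁰ K) =
      ∏ᶠ v : HeightOneSpectrum R, (v.asIdeal : FractionalIdeal R⁰ K) ^ ord a v := by
  refine ((Units.coeHom (FractionalIdeal R⁰ K)).map_finprod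
    (hasFiniteMulSupport_zpow_ord a (fractionalIdealUnit K))).trans ?_
  simp [fractionalIdealUnit]

theorem count_toFractionalIdeal (a : 𝔸ᶠ[R, K]ˣ) (v : HeightOneSpectrum R) :
    count K v (toFractionalIdeal R K a) = ord a v := by
  rw [coe_toFractionalIdeal, count_finprod K v _ (eventually_ord_eq_zero a)]

theorem toFractionalIdeal_eq_iff {a : 𝔸ᶠ[R, K]ˣ} {I : (FractionalIdeal R⁰ K)ˣ} :
    toFractionalIdeal R K a = I ↔ ∀ v, ord a v = count K v I := by
  refine ⟨by rintro rfl v; rw [count_toFractionalIdeal], fun h ↦ Units.ext ?_⟩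
  rw [coe_toFractionalIdeal, ← finprod_heightOneSpectrum_factorization' K I.ne_zero]
  exact finprod_congr fun v ↦ by rw [h v]

theorem toFractionalIdeal_surjective : Function.Surjective (toFractionalIdeal R K) := fun I ↦
  (exists_ord_eq (finite_factors (I : FractionalIdeal R⁰ K))).imp fun _ ↦
    toFractionalIdeal_eq_iff.mpr

theorem toFractionalIdeal_comp_unitEmbedding :
    (toFractionalIdeal R K).comp (unitEmbedding R K) = toPrincipalIdeal R K := by
  ext1 x
  rw [MonoidHom.comp_apply, toFractionalIdeal_eq_iff]
  intro v
  rw [ord_unitEmbedding, coe_toPrincipalIdeal, count_spanSingleton v x.ne_zero]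

theorem ker_toFractionalIdeal : (toFractionalIdeal R K).ker =
    (Units.map (algebraMap (FiniteIntegralAdeles R K) 𝔸ᶠ[R, K]).toMonoidHom).range := by
  ext a
  rw [MonoidHom.mem_ker, mem_range_integralUnits_iff, toFractionalIdeal_eq_iff]
  simp only [Units.val_one, count_one]

theorem ker_mk'_comp_toFractionalIdeal :
    ((QuotientGroup.mk' (toPrincipalIdeal R K).range).comp (toFractionalIdeal R K)).ker =
      (unitEmbedding R K).range ⊔ (toFractionalIdeal R K).ker := by
  rw [← MonoidHom.comap_ker, QuotientGroup.ker_mk', ← toFractionalIdeal_comp_unitEmbedding,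
    MonoidHom.range_comp, Subgroup.comap_map_eq]

end IsDedekindDomain.FiniteAdeleRing

open IsDedekindDomain.FiniteAdeleRing in
/-- Weil's adelic description of line bundles on `Spec R`.
For a Dedekind domain `R` with field of fractions `K`, the quotient of the group of finite
idèles `(A_{R,K})ˣ` by the subgroup generated by the images of `Kˣ` and of `(∏_v O_v)ˣ` is
isomorphic to the ideal class group of `R`. -/
theorem stmt11 (R K : Type*) [CommRing R] [IsDedekindDomain R] [Field K] [Algebra R K]
    [IsFractionRing R K] :
    Nonempty
      ((FiniteAdeleRing R K)ˣ ⧸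
          ((Units.map (algebraMap K (FiniteAdeleRing R K)).toMonoidHom).range ⊔
            (Units.map
              (algebraMap (FiniteIntegralAdeles R K) (FiniteAdeleRing R K)).toMonoidHom).range)
        ≃* ClassGroup R) := by
  have hsurj := (QuotientGroup.mk'_surjective (toPrincipalIdeal R K).range).comp
    (toFractionalIdeal_surjective (R := R) (K := K))
  have hker := ker_mk'_comp_toFractionalIdeal (R := R) (K := K)
  rw [ker_toFractionalIdeal] at hker
  exact ⟨(QuotientGroup.quotientMulEquivOfEq hker.symm).trans <|
    (QuotientGroup.quotientKerEquivOfSurjective _ hsurj).trans (ClassGroup.equiv K).symm⟩
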